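/- arXiv:1302.2857 — 6 statements merged into one kernel-verified Lean document; each statement's English description precedes it below -/
import Mathlib

section
/- Let F and G be skew-symmetric A-linear endomorphisms of E such that F∘G + G∘F = λ·id_E for some λ ∈ ℝ. Then the Nijenhuis concomitant N(F,G) is totally skew-symmetric with respect to the pairing: for all U, V, W ∈ E, N(F,G)(U,V) + N(F,G)(V,U) = 0 and ⟨N(F,G)(U,V), W⟩ + ⟨N(F,G)(U,W), V⟩ = 0. -/
open scoped TensorProduct
section BC

variable {M N P : Type} [AddCommGroup M] [Module ℝ M] [AddCommGroup N] [Module ℝ N]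
  [AddCommGroup P] [Module ℝ P]

/-- Complex-bilinear extension of an `ℝ`-bilinear map to the complexifications. -/
noncomputable def bcBilin (B : M →ₗ[ℝ] N →ₗ[ℝ] P) :
    ℂ ⊗[ℝ] M →ₗ[ℂ] ℂ ⊗[ℝ] N →ₗ[ℂ] ℂ ⊗[ℝ] P :=
  LinearMap.liftBaseChange ℂ ((LinearMap.baseChangeHom ℝ ℂ N P) ∘ₗ B)

/-- Complex conjugation on the complexification `ℂ ⊗[ℝ] M`. -/
noncomputable def conjT (M : Type) [AddCommGroup M] [Module ℝ M] :
    ℂ ⊗[ℝ] M →ₗ[ℝ] ℂ ⊗[ℝ] M :=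
  TensorProduct.map Complex.conjAe.toLinearMap LinearMap.id

/-- The `i`-eigenspace of a `ℂ`-linear endomorphism of `ℂ ⊗[ℝ] M`. -/
def eigP (Jc : ℂ ⊗[ℝ] M →ₗ[ℂ] ℂ ⊗[ℝ] M) : Set (ℂ ⊗[ℝ] M) :=
  {e | Jc e = Complex.I • e}

/-- The `-i`-eigenspace of a `ℂ`-linear endomorphism of `ℂ ⊗[ℝ] M`. -/
def eigM (Jc : ℂ ⊗[ℝ] M →ₗ[ℂ] ℂ ⊗[ℝ] M) : Set (ℂ ⊗[ℝ] M) :=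
  {e | Jc e = -(Complex.I • e)}

end BC

/-- An (algebraic) Courant algebroid: a commutative `ℝ`-algebra `A`, an `A`-module `E`,
a nondegenerate symmetric `A`-bilinear pairing, an anchor with values in `ℝ`-linear
derivations of `A`, a map `Dm : A → E`, and an `ℝ`-bilinear Dorfman bracket. -/
structure CourantAlgebroid (A E : Type) [CommRing A] [Algebra ℝ A]
    [AddCommGroup E] [Module ℝ E] [Module A E] [IsScalarTower ℝ A E] : Type where
  pair : E →ₗ[A] E →ₗ[A] A
  pair_symm : ∀ x y, pair x y = pair y x
  pair_nondeg : ∀ x, (∀ y, pair x y = 0) → x = 0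
  anchor : E →ₗ[A] Derivation ℝ A A
  Dm : A →ₗ[ℝ] E
  pair_Dm : ∀ (f : A) (x : E), pair (Dm f) x = (1/2 : ℝ) • anchor x f
  brac : E →ₗ[ℝ] E →ₗ[ℝ] E
  brac_leibniz : ∀ x y z, brac x (brac y z) = brac (brac x y) z + brac y (brac x z)
  anchor_brac : ∀ (x y : E) (f : A),
    anchor (brac x y) f = anchor x (anchor y f) - anchor y (anchor x f)
  brac_smul : ∀ (f : A) (x y : E), brac x (f • y) = anchor x f • y + f • brac x y
  brac_add_swap : ∀ x y, brac x y + brac y x = (2 : ℝ) • Dm (pair x y)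
  Dm_brac : ∀ (f : A) (x : E), brac (Dm f) x = 0
  anchor_pair : ∀ x y z, anchor x (pair y z) = pair (brac x y) z + pair y (brac x z)

namespace CourantAlgebroid

variable {A E : Type} [CommRing A] [Algebra ℝ A]
    [AddCommGroup E] [Module ℝ E] [Module A E] [IsScalarTower ℝ A E]

/-- The Nijenhuis concomitant of two operators with respect to a bracket. -/
def nijGen {M : Type*} [AddCommGroup M] (br : M → M → M) (F G : M → M) (U V : M) : M :=
  br (F U) (G V) - F (br U (G V)) - G (br (F U) V) + F (G (br U V))
    + br (G U) (F V) - G (br U (F V)) - F (br (G U) V) + G (F (br U V))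

/-- The Nijenhuis concomitant `N(F,G)` of two `A`-linear endomorphisms of `E`. -/
def nij (C : CourantAlgebroid A E) (F G : E →ₗ[A] E) (U V : E) : E :=
  nijGen (fun x y => C.brac x y) (fun e => F e) (fun e => G e) U V

/-- An almost complex structure: an orthogonal endomorphism squaring to `-1`. -/
def IsAlmostComplexStr (C : CourantAlgebroid A E) (J : E →ₗ[A] E) : Prop :=
  (∀ e, J (J e) = -e) ∧ ∀ x y, C.pair (J x) (J y) = C.pair x y

/-- A complex structure: an almost complex structure with vanishing Nijenhuis concomitant. -/
def IsComplexStr (C : CourantAlgebroid A E) (J : E →ₗ[A] E) : Prop :=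
  C.IsAlmostComplexStr J ∧ ∀ U V, C.nij J J U V = 0

/-- An almost hypercomplex structure: a triple of almost complex structures
satisfying the quaternionic relations. -/
def IsAlmostHypercomplex (C : CourantAlgebroid A E) (I J K : E →ₗ[A] E) : Prop :=
  C.IsAlmostComplexStr I ∧ C.IsAlmostComplexStr J ∧ C.IsAlmostComplexStr K ∧
    ∀ e, I (J (K e)) = -e

/-- A hypercomplex structure: an almost hypercomplex structure all of whose six
Nijenhuis concomitants vanish. -/
def IsHypercomplex (C : CourantAlgebroid A E) (I J K : E →ₗ[A] E) : Prop :=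
  C.IsAlmostHypercomplex I J K ∧
    (∀ U V, C.nij I I U V = 0) ∧ (∀ U V, C.nij I J U V = 0) ∧ (∀ U V, C.nij I K U V = 0) ∧
    (∀ U V, C.nij J J U V = 0) ∧ (∀ U V, C.nij J K U V = 0) ∧ (∀ U V, C.nij K K U V = 0)

/-- The Poisson-type bracket on `A` induced by a skew-symmetric endomorphism `F`. -/
def pb (C : CourantAlgebroid A E) (F : E →ₗ[A] E) (f g : A) : A :=
  C.pair (F (C.Dm f)) (C.Dm g)

/-- `Δ_f(U,V)` associated with an almost hypercomplex triple. -/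
def Delta (C : CourantAlgebroid A E) (I J K : E →ₗ[A] E) (f : A) (U V : E) : E :=
  C.pair U V • C.Dm f + C.pair (I U) V • I (C.Dm f) + C.pair (J U) V • J (C.Dm f)
    + C.pair (K U) V • K (C.Dm f)

/-- A hypercomplex connection relative to an almost hypercomplex triple. -/
def IsHConn (C : CourantAlgebroid A E) (I J K : E →ₗ[A] E)
    (conn : E →ₗ[ℝ] E →ₗ[ℝ] E) : Prop :=
  (∀ (f : A) (U V : E), conn (f • U) V = f • conn U V) ∧
  (∀ (f : A) (U V : E),
    conn U (f • V) = C.anchor U f • V + f • conn U V - C.Delta I J K f U V)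

/-- The torsion of an `ℝ`-bilinear connection. -/
noncomputable def torsion (C : CourantAlgebroid A E) (conn : E →ₗ[ℝ] E →ₗ[ℝ] E) (U V : E) : E :=
  conn U V - conn V U - (1/2 : ℝ) • (C.brac U V - C.brac V U)

/-- The canonical hypercomplex connection. -/
noncomputable def hconn (C : CourantAlgebroid A E) (I J K : E →ₗ[A] E) (U V : E) : E :=
  -((1/2 : ℝ) • K (C.brac (J V) (I U) - J (C.brac V (I U)) - I (C.brac (J V) U)
      + J (I (C.brac V U))))

/-- The pairing as an `ℝ`-bilinear map. -/
noncomputable def pairR (C : CourantAlgebroid A E) : E →ₗ[ℝ] E →ₗ[ℝ] A :=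
  LinearMap.mk₂ ℝ (fun x y => C.pair x y)
    (fun x x' y => by simp)
    (fun r x y => by
      show C.pair (r • x) y = r • C.pair x y
      rw [← algebraMap_smul A r x, map_smul, LinearMap.smul_apply, algebraMap_smul])
    (fun x y y' => by simp)
    (fun r x y => by
      show C.pair x (r • y) = r • C.pair x y
      rw [← algebraMap_smul A r y, map_smul, algebraMap_smul])

/-- The anchor as an `ℝ`-bilinear map `E → A → A`. -/
noncomputable def rhoR (C : CourantAlgebroid A E) : E →ₗ[ℝ] A →ₗ[ℝ] A :=
  LinearMap.mk₂ ℝ (fun x f => C.anchor x f)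
    (fun x x' f => by simp)
    (fun r x f => by
      show C.anchor (r • x) f = r • C.anchor x f
      rw [← algebraMap_smul A r x, map_smul, Derivation.smul_apply, algebraMap_smul])
    (fun x f f' => by simp)
    (fun r x f => by simp)

/-- The `A`-module structure on `E` as an `ℝ`-bilinear map. -/
noncomputable def smulR (A E : Type) [CommRing A] [Algebra ℝ A]
    [AddCommGroup E] [Module ℝ E] [Module A E] [IsScalarTower ℝ A E] :
    A →ₗ[ℝ] E →ₗ[ℝ] E :=
  LinearMap.mk₂ ℝ (fun a e => a • e)
    (fun a a' e => add_smul a a' e)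
    (fun r a e => smul_assoc r a e)
    (fun a e e' => smul_add a e e')
    (fun r a e => smul_comm a r e)

/-- Complex-bilinear extension of the pairing. -/
noncomputable def pairC (C : CourantAlgebroid A E) :
    ℂ ⊗[ℝ] E →ₗ[ℂ] ℂ ⊗[ℝ] E →ₗ[ℂ] ℂ ⊗[ℝ] A := bcBilin C.pairR

/-- Complex-bilinear extension of the Dorfman bracket. -/
noncomputable def bracC (C : CourantAlgebroid A E) :
    ℂ ⊗[ℝ] E →ₗ[ℂ] ℂ ⊗[ℝ] E →ₗ[ℂ] ℂ ⊗[ℝ] E := bcBilin C.brac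

/-- Complex-bilinear extension of the anchor. -/
noncomputable def rhoC (C : CourantAlgebroid A E) :
    ℂ ⊗[ℝ] E →ₗ[ℂ] ℂ ⊗[ℝ] A →ₗ[ℂ] ℂ ⊗[ℝ] A := bcBilin C.rhoR

/-- Complex-bilinear extension of the `A`-action on `E`. -/
noncomputable def smulC (C : CourantAlgebroid A E) :
    ℂ ⊗[ℝ] A →ₗ[ℂ] ℂ ⊗[ℝ] E →ₗ[ℂ] ℂ ⊗[ℝ] E := bcBilin (smulR A E)

/-- The `ℂ`-linear extension of an `A`-linear endomorphism of `E` to `ℂ ⊗[ℝ] E`. -/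
noncomputable def cext (F : E →ₗ[A] E) : ℂ ⊗[ℝ] E →ₗ[ℂ] ℂ ⊗[ℝ] E :=
  (F.restrictScalars ℝ).baseChange ℂ

/-- `Ω^♯ = (1/2)(I + iK)` associated with an (almost) hypercomplex triple. -/
noncomputable def OmS (I K : E →ₗ[A] E) : ℂ ⊗[ℝ] E →ₗ[ℂ] ℂ ⊗[ℝ] E :=
  (1/2 : ℂ) • (cext I + Complex.I • cext K)

/-- `Ω̄^♯ = (1/2)(I - iK)` associated with an (almost) hypercomplex triple. -/
noncomputable def ObS (I K : E →ₗ[A] E) : ℂ ⊗[ℝ] E →ₗ[ℂ] ℂ ⊗[ℝ] E :=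
  (1/2 : ℂ) • (cext I - Complex.I • cext K)

/-- `Ω(ξ,η) = ⟨Ω^♯ξ, η⟩`. -/
noncomputable def Omf (C : CourantAlgebroid A E) (I K : E →ₗ[A] E)
    (x y : ℂ ⊗[ℝ] E) : ℂ ⊗[ℝ] A :=
  C.pairC (OmS I K x) y

/-- The complexified hypercomplex connection on `ℂ ⊗[ℝ] E`. -/
noncomputable def hconnC (C : CourantAlgebroid A E) (I J K : E →ₗ[A] E)
    (U V : ℂ ⊗[ℝ] E) : ℂ ⊗[ℝ] E :=
  -((1/2 : ℂ) • cext K (C.bracC (cext J V) (cext I U) - cext J (C.bracC V (cext I U))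
      - cext I (C.bracC (cext J V) U) + cext J (cext I (C.bracC V U))))

end CourantAlgebroid

open CourantAlgebroid

/-!
Symmetrizing `N(F,G)(U,V)` in `U, V` replaces the bracket by `x ∘ y + y ∘ x = 2 D⟨x,y⟩`; the
resulting terms cancel because `F`, `G` are skew and `⟨FU,GV⟩ + ⟨GU,FV⟩ = -λ⟨U,V⟩`.
For the second identity, move `F` and `G` across the pairing and symmetrize in `V, W`: the terms
pair up into `⟨x ∘ y, z⟩ + ⟨x ∘ z, y⟩ = ρ(x)⟨y,z⟩`, and the arguments of `ρ` vanish for the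
same two reasons.
-/

namespace CourantAlgebroid

theorem nijGen_add_swap {M : Type*} [AddCommGroup M] (br : M → M → M) (F G : M →+ M)
    (U V : M) :
    nijGen br F G U V + nijGen br F G V U = nijGen (fun x y => br x y + br y x) F G U V := by
  simp only [nijGen, map_add]
  abel

variable {A E : Type} [CommRing A] [Algebra ℝ A] [AddCommGroup E] [Module ℝ E]
  [Module A E] [IsScalarTower ℝ A E] (C : CourantAlgebroid A E) {F G : E →ₗ[A] E} {lam : ℝ}

theorem pair_add_pair_eq_neg_smul (hF : ∀ U V : E, C.pair (F U) V = -C.pair U (F V))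
    (hG : ∀ U V : E, C.pair (G U) V = -C.pair U (G V))
    (hFG : ∀ e : E, F (G e) + G (F e) = lam • e) (x y : E) :
    C.pair (F x) (G y) + C.pair (G x) (F y) = -(lam • C.pair x y) := by
  rw [hF, hG, ← neg_add, ← map_add, hFG, LinearMap.map_smul_of_tower]

theorem pair_anticomm_eq_smul (hFG : ∀ e : E, F (G e) + G (F e) = lam • e) (x y : E) :
    C.pair x (G (F y)) + C.pair x (F (G y)) = lam • C.pair x y := by
  rw [← map_add, add_comm, hFG, LinearMap.map_smul_of_tower]

theorem nijGen_two_smul_Dm_pair (hF : ∀ U V : E, C.pair (F U) V = -C.pair U (F V))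
    (hG : ∀ U V : E, C.pair (G U) V = -C.pair U (G V))
    (hFG : ∀ e : E, F (G e) + G (F e) = lam • e) (U V : E) :
    nijGen (fun x y => (2 : ℝ) • C.Dm (C.pair x y)) F G U V = 0 := by
  have expand : nijGen (fun x y => (2 : ℝ) • C.Dm (C.pair x y)) F G U V =
      (2 : ℝ) • (C.Dm (C.pair (F U) (G V) + C.pair (G U) (F V))
        - F (C.Dm (C.pair U (G V) + C.pair (G U) V))
        - G (C.Dm (C.pair (F U) V + C.pair U (F V)))
        + (F (G (C.Dm (C.pair U V))) + G (F (C.Dm (C.pair U V))))) := by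
    simp only [nijGen, map_add, LinearMap.map_smul_of_tower]
    module
  rw [expand, pair_add_pair_eq_neg_smul C hF hG hFG, hFG, hF, hG]
  simp

theorem nij_add_nij_swap (hF : ∀ U V : E, C.pair (F U) V = -C.pair U (F V))
    (hG : ∀ U V : E, C.pair (G U) V = -C.pair U (G V))
    (hFG : ∀ e : E, F (G e) + G (F e) = lam • e) (U V : E) :
    C.nij F G U V + C.nij F G V U = 0 := by
  have h := nijGen_add_swap (fun x y => C.brac x y) F.toAddMonoidHom G.toAddMonoidHom U V
  simp only [C.brac_add_swap] at h
  exact h.trans (nijGen_two_smul_Dm_pair C hF hG hFG U V)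

theorem pair_nij (hF : ∀ U V : E, C.pair (F U) V = -C.pair U (F V))
    (hG : ∀ U V : E, C.pair (G U) V = -C.pair U (G V))
    (hFG : ∀ e : E, F (G e) + G (F e) = lam • e) (U V W : E) :
    C.pair (C.nij F G U V) W =
      C.pair (C.brac (F U) (G V)) W + C.pair (C.brac (F U) V) (G W)
        + (C.pair (C.brac (G U) (F V)) W + C.pair (C.brac (G U) V) (F W))
        + (C.pair (C.brac U (G V)) (F W) + C.pair (C.brac U (F V)) (G W))
        + lam • C.pair (C.brac U V) W := by
  simp only [nij, nijGen, map_add, map_sub, LinearMap.add_apply, LinearMap.sub_apply, hF, hG,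
    neg_neg]
  rw [← pair_anticomm_eq_smul C hFG]
  ring

theorem pair_nij_add_pair_nij_swap (hF : ∀ U V : E, C.pair (F U) V = -C.pair U (F V))
    (hG : ∀ U V : E, C.pair (G U) V = -C.pair U (G V))
    (hFG : ∀ e : E, F (G e) + G (F e) = lam • e) (U V W : E) :
    C.pair (C.nij F G U V) W + C.pair (C.nij F G U W) V =
      C.anchor (F U) (C.pair (G V) W + C.pair V (G W))
        + C.anchor (G U) (C.pair (F V) W + C.pair V (F W))
        + C.anchor U (C.pair (F V) (G W) + C.pair (G V) (F W) + lam • C.pair V W) := by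
  simp only [pair_nij C hF hG hFG, map_add, Derivation.map_smul_of_tower, C.anchor_pair]
  simp only [C.pair_symm (C.brac _ _) (F _), C.pair_symm (C.brac _ _) (G _),
    C.pair_symm (C.brac _ _) V, C.pair_symm (C.brac _ _) W]
  module

end CourantAlgebroid

theorem stmt0 {A E : Type} [CommRing A] [Algebra ℝ A] [AddCommGroup E] [Module ℝ E]
    [Module A E] [IsScalarTower ℝ A E] (C : CourantAlgebroid A E) (F G : E →ₗ[A] E)
    (hF : ∀ U V : E, C.pair (F U) V = -C.pair U (F V))
    (hG : ∀ U V : E, C.pair (G U) V = -C.pair U (G V))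
    (lam : ℝ) (hFG : ∀ e : E, F (G e) + G (F e) = lam • e) :
    ∀ U V W : E,
      C.nij F G U V + C.nij F G V U = 0 ∧
      C.pair (C.nij F G U V) W + C.pair (C.nij F G U W) V = 0 := by
  intro U V W
  refine ⟨C.nij_add_nij_swap hF hG hFG U V, ?_⟩
  rw [C.pair_nij_add_pair_nij_swap hF hG hFG, hF, hG, C.pair_add_pair_eq_neg_smul hF hG hFG]
  simp
end

section
/- Let F be a skew-symmetric A-linear endomorphism of E and define {f,g} = ⟨F(Df), Dg⟩ for f, g ∈ A. Then for all f, g, h ∈ A: {{f,g},h} + {{g,h},f} + {{h,f},g} = −(1/4)·⟨N(F,F)(Df, Dg), Dh⟩. In particular, if N(F,F) = 0 then {·,·} satisfies the Jacobi identity. -/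
open scoped TensorProduct
open CourantAlgebroid

/-!
Because `D f ∘ x = 0` and `x ∘ D f = D (ρ(x) f)`, only two kinds of terms survive in
`N(F,F)(Df, Dg)`, and it equals `2 (FDf ∘ FDg - F (FDf ∘ Dg))`. Pairing with `Dh` and using
`ρ(x) h = 2 ⟨x, Dh⟩` together with `ρ(x ∘ y) = [ρ x, ρ y]` expresses this through iterated
brackets `{f,{g,h}} - {g,{f,h}} - {{f,g},h}`; skew-symmetry of `F` makes `{·,·}` antisymmetric,
which turns that combination into minus the cyclic sum.
-/

namespace CourantAlgebroid

variable {A E : Type} [CommRing A] [Algebra ℝ A] [AddCommGroup E] [Module ℝ E]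
    [Module A E] [IsScalarTower ℝ A E] (C : CourantAlgebroid A E)

lemma anchor_eq_two_smul_pair_Dm (x : E) (f : A) :
    C.anchor x f = (2 : ℝ) • C.pair x (C.Dm f) := by
  rw [C.pair_symm, C.pair_Dm, smul_smul]
  norm_num

lemma brac_Dm (x : E) (f : A) : C.brac x (C.Dm f) = C.Dm (C.anchor x f) := by
  have h := C.brac_add_swap x (C.Dm f)
  rw [C.Dm_brac, add_zero] at h
  rw [h, C.pair_symm, C.pair_Dm, map_smul, smul_smul]
  norm_num

lemma anchor_apply_Dm (F : E →ₗ[A] E) (f g : A) :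
    C.anchor (F (C.Dm f)) g = (2 : ℝ) • C.pb F f g :=
  C.anchor_eq_two_smul_pair_Dm _ g

lemma pb_smul_left (F : E →ₗ[A] E) (r : ℝ) (f g : A) :
    C.pb F (r • f) g = r • C.pb F f g := by
  simp only [pb, map_smul, LinearMap.map_smul_of_tower, LinearMap.smul_apply]

lemma pb_neg_left (F : E →ₗ[A] E) (f g : A) : C.pb F (-f) g = -C.pb F f g := by
  simp only [pb, map_neg, LinearMap.neg_apply]

lemma pb_anticomm {F : E →ₗ[A] E} (hF : ∀ U V : E, C.pair (F U) V = -C.pair U (F V))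
    (f g : A) : C.pb F f g = -C.pb F g f := by
  rw [pb, pb, hF, C.pair_symm (C.Dm f)]

lemma nij_Dm_Dm (F G : E →ₗ[A] E) (f g : A) :
    C.nij F G (C.Dm f) (C.Dm g) =
      C.brac (F (C.Dm f)) (G (C.Dm g)) + C.brac (G (C.Dm f)) (F (C.Dm g))
        - G (C.brac (F (C.Dm f)) (C.Dm g)) - F (C.brac (G (C.Dm f)) (C.Dm g)) := by
  simp only [nij, nijGen, C.Dm_brac, map_zero, add_zero, sub_zero]
  abel

lemma pair_brac_Dm (F : E →ₗ[A] E) (f g h : A) :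
    C.pair (C.brac (F (C.Dm f)) (F (C.Dm g))) (C.Dm h) =
      (2 : ℝ) • (C.pb F f (C.pb F g h) - C.pb F g (C.pb F f h)) := by
  rw [C.pair_symm, C.pair_Dm, C.anchor_brac, C.anchor_apply_Dm F g h, C.anchor_apply_Dm F f h,
    Derivation.map_smul, Derivation.map_smul, C.anchor_apply_Dm, C.anchor_apply_Dm]
  module

lemma pair_F_brac_Dm (F : E →ₗ[A] E) (f g h : A) :
    C.pair (F (C.brac (F (C.Dm f)) (C.Dm g))) (C.Dm h) = (2 : ℝ) • C.pb F (C.pb F f g) h := by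
  rw [C.brac_Dm, C.anchor_apply_Dm]
  exact C.pb_smul_left F 2 _ h

lemma pair_nij_self_Dm (F : E →ₗ[A] E) (f g h : A) :
    C.pair (C.nij F F (C.Dm f) (C.Dm g)) (C.Dm h) =
      (4 : ℝ) • (C.pb F f (C.pb F g h) - C.pb F g (C.pb F f h) - C.pb F (C.pb F f g) h) := by
  rw [C.nij_Dm_Dm]
  simp only [map_add, map_sub, LinearMap.add_apply, LinearMap.sub_apply, C.pair_brac_Dm,
    C.pair_F_brac_Dm]
  module

end CourantAlgebroid

theorem stmt1 {A E : Type} [CommRing A] [Algebra ℝ A] [AddCommGroup E] [Module ℝ E]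
    [Module A E] [IsScalarTower ℝ A E] (C : CourantAlgebroid A E) (F : E →ₗ[A] E)
    (hF : ∀ U V : E, C.pair (F U) V = -C.pair U (F V)) :
    (∀ f g h : A,
      C.pb F (C.pb F f g) h + C.pb F (C.pb F g h) f + C.pb F (C.pb F h f) g =
        -((1/4 : ℝ) • C.pair (C.nij F F (C.Dm f) (C.Dm g)) (C.Dm h))) ∧
    ((∀ U V : E, C.nij F F U V = 0) →
      ∀ f g h : A,
        C.pb F (C.pb F f g) h + C.pb F (C.pb F g h) f + C.pb F (C.pb F h f) g = 0) := by
  have jacobiator (f g h : A) :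
      C.pb F (C.pb F f g) h + C.pb F (C.pb F g h) f + C.pb F (C.pb F h f) g =
        -((1/4 : ℝ) • C.pair (C.nij F F (C.Dm f) (C.Dm g)) (C.Dm h)) := by
    rw [C.pair_nij_self_Dm, C.pb_anticomm hF f (C.pb F g h), C.pb_anticomm hF h f,
      C.pb_neg_left, C.pb_anticomm hF g (C.pb F f h)]
    module
  refine ⟨jacobiator, fun hN f g h => ?_⟩
  rw [jacobiator, hN, map_zero, LinearMap.zero_apply, smul_zero, neg_zero]
end

section
/- Let (I,J,K) be a hypercomplex structure on E and let λ₁, λ₂, λ₃ ∈ ℝ with λ₁² + λ₂² + λ₃² = 1. Then λ₁I + λ₂J + λ₃K is a complex structure on E: it squares to −id_E, it is orthogonal for the pairing, and its Nijenhuis concomitant with itself vanishes identically. -/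
open scoped TensorProduct
open CourantAlgebroid

/-!
For `F = l1 • I + l2 • J + l3 • K`, both `F * F` and `N(F,F)(U,V)` are values on the diagonal
of bilinear maps (composition, and the concomitant `N` as a function of its two operators), so
they expand as quadratic forms in `(l1, l2, l3)`. The quaternionic relations make `I, J, K`
pairwise anticommute, so `F * F = -(l1^2 + l2^2 + l3^2) = -1`, and the six vanishing
concomitants give `N(F,F) = 0`. Orthogonality follows because `F`, a combination of
skew-adjoint maps, is skew-adjoint, and a skew-adjoint map squaring to `-1` is orthogonal.
-/

theorem LinearMap.apply_smul_add_smul_add_smul_self {R M N : Type*} [CommRing R]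
    [AddCommGroup M] [Module R M] [AddCommGroup N] [Module R N]
    (β : M →ₗ[R] M →ₗ[R] N) (a b c : R) (x y z : M) :
    β (a • x + b • y + c • z) (a • x + b • y + c • z) =
      (a * a) • β x x + (b * b) • β y y + (c * c) • β z z + (a * b) • (β x y + β y x)
        + (a * c) • (β x z + β z x) + (b * c) • (β y z + β z y) := by
  simp only [map_add, map_smul, LinearMap.add_apply, LinearMap.smul_apply]
  module

theorem mul_add_mul_swap_eq_zero_of_mul_self_eq_neg_one {R : Type*} [Ring R] {x y : R}
    (hx : x * x = -1) (hy : y * y = -1) (hxy : x * y * (x * y) = -1) : x * y + y * x = 0 := by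
  have hyxy : y * x * y = x :=
    calc y * x * y = -(x * x * (y * x * y)) := by rw [hx, neg_one_mul, neg_neg]
      _ = -(x * (x * y * (x * y))) := by noncomm_ring
      _ = x := by rw [hxy, mul_neg_one, neg_neg]
  have hyx : y * x = -(x * y) :=
    calc y * x = -(y * x * y * y) := by rw [mul_assoc _ y y, hy, mul_neg_one, neg_neg]
      _ = -(x * y) := by rw [hyxy]
  rw [hyx, add_neg_cancel]

namespace CourantAlgebroid

variable {A E : Type} [CommRing A] [Algebra ℝ A]
    [AddCommGroup E] [Module ℝ E] [Module A E] [IsScalarTower ℝ A E]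

theorem nij_comm (C : CourantAlgebroid A E) (F G : E →ₗ[A] E) (U V : E) :
    C.nij F G U V = C.nij G F U V := by
  unfold nij nijGen
  abel

theorem nij_add_left (C : CourantAlgebroid A E) (F F' G : E →ₗ[A] E) (U V : E) :
    C.nij (F + F') G U V = C.nij F G U V + C.nij F' G U V := by
  simp only [nij, nijGen, LinearMap.add_apply, map_add]
  abel

theorem nij_smul_left (C : CourantAlgebroid A E) (r : ℝ) (F G : E →ₗ[A] E) (U V : E) :
    C.nij (r • F) G U V = r • C.nij F G U V := by
  simp only [nij, nijGen, LinearMap.smul_apply, map_smul, LinearMap.map_smul_of_tower]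
  module

noncomputable def nijBilin (C : CourantAlgebroid A E) (U V : E) :
    (E →ₗ[A] E) →ₗ[ℝ] (E →ₗ[A] E) →ₗ[ℝ] E :=
  LinearMap.mk₂ ℝ (fun F G => C.nij F G U V)
    (fun F F' G => C.nij_add_left F F' G U V)
    (fun r F G => C.nij_smul_left r F G U V)
    (fun F G G' => by simp only [nij_comm C F, nij_add_left])
    (fun r F G => by simp only [nij_comm C F, nij_smul_left])

variable {C : CourantAlgebroid A E}

theorem IsAlmostComplexStr.mul_self_eq_neg_one {J : E →ₗ[A] E} (hJ : C.IsAlmostComplexStr J) :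
    J * J = -1 :=
  LinearMap.ext hJ.1

theorem IsAlmostComplexStr.isSkewAdjoint {J : E →ₗ[A] E} (hJ : C.IsAlmostComplexStr J) :
    C.pair.IsSkewAdjoint J := fun x y => by
  have h := hJ.2 x (J y)
  rw [hJ.1, map_neg, neg_eq_iff_eq_neg] at h
  simpa using h

theorem isAlmostComplexStr_of_isSkewAdjoint {F : E →ₗ[A] E} (hF : C.pair.IsSkewAdjoint F)
    (hF2 : F * F = -1) : C.IsAlmostComplexStr F :=
  have hsq (e : E) : F (F e) = -e := LinearMap.congr_fun hF2 e
  ⟨hsq, fun x y => by rw [hF x, Pi.neg_apply, hsq, neg_neg]⟩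

namespace IsAlmostHypercomplex

variable {I J K : E →ₗ[A] E} (h : C.IsAlmostHypercomplex I J K)
include h

theorem mul_I_J : I * J = K := by
  have hIJK : I * J * K = -1 := LinearMap.ext h.2.2.2
  calc I * J = -(I * J * K) * K := by
        rw [neg_mul, mul_assoc (I * J), h.2.2.1.mul_self_eq_neg_one, mul_neg_one, neg_neg]
    _ = K := by rw [hIJK, neg_neg, one_mul]

theorem mul_J_K : J * K = I := by
  calc J * K = -(I * (I * J * K)) := by
        rw [mul_assoc, ← mul_assoc I I, h.1.mul_self_eq_neg_one, neg_one_mul, neg_neg]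
    _ = I := by rw [h.mul_I_J, h.2.2.1.mul_self_eq_neg_one, mul_neg_one, neg_neg]

theorem mul_I_K : I * K = -J := by
  rw [← h.mul_I_J, ← mul_assoc, h.1.mul_self_eq_neg_one, neg_one_mul]

theorem anticomm_I_J : I * J + J * I = 0 :=
  mul_add_mul_swap_eq_zero_of_mul_self_eq_neg_one h.1.mul_self_eq_neg_one
    h.2.1.mul_self_eq_neg_one (by rw [h.mul_I_J, h.2.2.1.mul_self_eq_neg_one])

theorem anticomm_I_K : I * K + K * I = 0 :=
  mul_add_mul_swap_eq_zero_of_mul_self_eq_neg_one h.1.mul_self_eq_neg_one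
    h.2.2.1.mul_self_eq_neg_one (by rw [h.mul_I_K, neg_mul_neg, h.2.1.mul_self_eq_neg_one])

theorem anticomm_J_K : J * K + K * J = 0 :=
  mul_add_mul_swap_eq_zero_of_mul_self_eq_neg_one h.2.1.mul_self_eq_neg_one
    h.2.2.1.mul_self_eq_neg_one (by rw [h.mul_J_K, h.1.mul_self_eq_neg_one])

theorem smul_add_smul_add_smul_mul_self {l1 l2 l3 : ℝ} (hl : l1 ^ 2 + l2 ^ 2 + l3 ^ 2 = 1) :
    (l1 • I + l2 • J + l3 • K) * (l1 • I + l2 • J + l3 • K) = -1 := by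
  have hexp :=
    (LinearMap.mul ℝ (Module.End A E)).apply_smul_add_smul_add_smul_self l1 l2 l3 I J K
  simp only [LinearMap.mul_apply'] at hexp
  rw [hexp, h.1.mul_self_eq_neg_one, h.2.1.mul_self_eq_neg_one, h.2.2.1.mul_self_eq_neg_one,
    h.anticomm_I_J, h.anticomm_I_K, h.anticomm_J_K]
  linear_combination (norm := module) -(hl • (1 : Module.End A E))

theorem isAlmostComplexStr_smul_add_smul_add_smul {l1 l2 l3 : ℝ}
    (hl : l1 ^ 2 + l2 ^ 2 + l3 ^ 2 = 1) : C.IsAlmostComplexStr (l1 • I + l2 • J + l3 • K) := by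
  have hmem {F : E →ₗ[A] E} (hF : C.IsAlmostComplexStr F) : F ∈ C.pair.skewAdjointSubmodule :=
    (LinearMap.mem_skewAdjointSubmodule F).2 hF.isSkewAdjoint
  have hskew : l1 • I + l2 • J + l3 • K ∈ C.pair.skewAdjointSubmodule :=
    add_mem (add_mem (Submodule.smul_of_tower_mem _ l1 (hmem h.1))
      (Submodule.smul_of_tower_mem _ l2 (hmem h.2.1)))
      (Submodule.smul_of_tower_mem _ l3 (hmem h.2.2.1))
  exact isAlmostComplexStr_of_isSkewAdjoint ((LinearMap.mem_skewAdjointSubmodule _).1 hskew)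
    (h.smul_add_smul_add_smul_mul_self hl)

end IsAlmostHypercomplex

theorem IsHypercomplex.isComplexStr_smul_add_smul_add_smul {I J K : E →ₗ[A] E}
    (h : C.IsHypercomplex I J K) {l1 l2 l3 : ℝ} (hl : l1 ^ 2 + l2 ^ 2 + l3 ^ 2 = 1) :
    C.IsComplexStr (l1 • I + l2 • J + l3 • K) := by
  obtain ⟨hA, hII, hIJ, hIK, hJJ, hJK, hKK⟩ := h
  refine ⟨hA.isAlmostComplexStr_smul_add_smul_add_smul hl, fun U V => ?_⟩
  have hexp := (C.nijBilin U V).apply_smul_add_smul_add_smul_self l1 l2 l3 I J K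
  simp only [nijBilin, LinearMap.mk₂_apply] at hexp
  simp [hexp, nij_comm C J I, nij_comm C K I, nij_comm C K J, hII, hIJ, hIK, hJJ, hJK, hKK]

end CourantAlgebroid

theorem stmt3 {A E : Type} [CommRing A] [Algebra ℝ A] [AddCommGroup E] [Module ℝ E]
    [Module A E] [IsScalarTower ℝ A E] (C : CourantAlgebroid A E) (I J K : E →ₗ[A] E)
    (h : C.IsHypercomplex I J K) (l1 l2 l3 : ℝ) (hl : l1 ^ 2 + l2 ^ 2 + l3 ^ 2 = 1) :
    (∀ e : E, (l1 • I + l2 • J + l3 • K) ((l1 • I + l2 • J + l3 • K) e) = -e) ∧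
    (∀ U V : E, C.pair ((l1 • I + l2 • J + l3 • K) U) ((l1 • I + l2 • J + l3 • K) V) =
      C.pair U V) ∧
    (∀ U V : E, C.nij (l1 • I + l2 • J + l3 • K) (l1 • I + l2 • J + l3 • K) U V = 0) := by
  obtain ⟨⟨hsq, horth⟩, hnij⟩ := h.isComplexStr_smul_add_smul_add_smul hl
  exact ⟨hsq, horth, hnij⟩
end

section
/- Let (I,J,K) be a hypercomplex structure on E and define ∇ : E × E → E by ∇_U V = −(1/2)·K(JV∘IU − J(V∘IU) − I(JV∘U) + JI(V∘U)). Then: (a) ∇ is a hypercomplex connection, i.e. ∇_{f·U}V = f·∇_U V and ∇_U(f·V) = (ρ(U)f)·V + f·∇_U V − Δ_f(U,V) for all f ∈ A, U, V ∈ E; (b) ∇I = ∇J = ∇K = 0; (c) its torsion satisfies T^∇(U,V) = I(D⟨U,IV⟩) + J(D⟨U,JV⟩) + K(D⟨U,KV⟩) for all U, V ∈ E. -/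
open scoped TensorProduct
open CourantAlgebroid

/-! The connection is `∇_U V = -½ K X(U,V)` with `X(U,V) = JV∘IU - J(V∘IU) - I(JV∘U) + JI(V∘U)`.
Since `U` only enters the right slot of the Dorfman bracket, `∇` is `A`-linear in `U`; in `V` it
obeys the left Leibniz rule `(f x)∘y = f (x∘y) - ρ(y)f x + 2⟨x,y⟩ Df`, which follows from
`x∘y + y∘x = 2D⟨x,y⟩` and the derivation property of `D` (a consequence of nondegeneracy), and
whose `⟨·,·⟩ Df` terms assemble into `Δ_f`. That `∇J = 0` is pure quaternion algebra. For `∇I = 0`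
and for the torsion, one symmetrizes the brackets with `x∘y + y∘x = 2D⟨x,y⟩`: what remains is a
combination of `N(I,I)(U,V)` and `N(I,I)(U,JV)`, resp. of `N(I,J)(U,V)`. Finally `∇K = 0`
follows from `K = IJ`. -/

namespace CourantAlgebroid

variable {A E : Type} [CommRing A] [Algebra ℝ A]
    [AddCommGroup E] [Module ℝ E] [Module A E] [IsScalarTower ℝ A E]
    (C : CourantAlgebroid A E)

theorem Dm_mul (f g : A) :
    C.Dm (f * g) = f • C.Dm g + g • C.Dm f := by
  refine sub_eq_zero.mp (C.pair_nondeg _ fun z => ?_)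
  simp only [map_sub, map_add, map_smul, LinearMap.sub_apply, LinearMap.add_apply,
    LinearMap.smul_apply, smul_eq_mul, C.pair_Dm, Derivation.leibniz, Algebra.smul_def]
  ring

theorem brac_smul_left (f : A) (x y : E) :
    C.brac (f • x) y =
      f • C.brac x y - C.anchor y f • x + (2 : ℝ) • (C.pair x y • C.Dm f) := by
  have hfx := C.brac_add_swap (f • x) y
  rw [C.brac_smul, C.pair.map_smul, LinearMap.smul_apply, smul_eq_mul, C.Dm_mul] at hfx
  linear_combination (norm := module) hfx - f • C.brac_add_swap x y

theorem hconn_smul_left (I J K : E →ₗ[A] E) (f : A) (U V : E) :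
    C.hconn I J K (f • U) V = f • C.hconn I J K U V := by
  simp only [hconn, map_smul, C.brac_smul, map_add, map_sub, smul_add, smul_sub, smul_neg]
  module

variable {C}

namespace IsAlmostComplexStr

variable {J : E →ₗ[A] E} (hJ : C.IsAlmostComplexStr J)
include hJ

theorem pair_apply_left (x y : E) : C.pair (J x) y = -C.pair x (J y) := by
  rw [← hJ.2 x (J y), hJ.1, map_neg, neg_neg]

theorem pair_apply_right_comm (x y : E) : C.pair y (J x) = -C.pair x (J y) := by
  rw [C.pair_symm, hJ.pair_apply_left]

end IsAlmostComplexStr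

namespace IsAlmostHypercomplex

variable {I J K : E →ₗ[A] E} (h : C.IsAlmostHypercomplex I J K)
include h

theorem I_I (e : E) : I (I e) = -e := h.1.1 e

theorem J_J (e : E) : J (J e) = -e := h.2.1.1 e

theorem K_K (e : E) : K (K e) = -e := h.2.2.1.1 e

theorem I_J (e : E) : I (J e) = K e := by
  simpa [h.K_K] using h.2.2.2 (K e)

theorem J_K (e : E) : J (K e) = I e := by
  simpa [h.I_I] using congrArg I (h.2.2.2 e)

theorem K_J (e : E) : K (J e) = -I e := by
  simpa [h.J_J] using (h.I_J (J e)).symm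

theorem K_I (e : E) : K (I e) = J e := by
  simpa [h.K_K] using (congrArg K (h.K_J e)).symm

theorem J_I (e : E) : J (I e) = -K e := by
  simpa [h.I_I] using (h.K_I (I e)).symm

theorem I_K (e : E) : I (K e) = -J e :=
  neg_eq_iff_eq_neg.mp (by simpa [h.J_J, h.K_K] using congrArg J (h.J_I (K e)))

theorem pair_I_left (x y : E) : C.pair (I x) y = -C.pair x (I y) := h.1.pair_apply_left x y

theorem pair_J_left (x y : E) : C.pair (J x) y = -C.pair x (J y) := h.2.1.pair_apply_left x y

theorem pair_K_left (x y : E) : C.pair (K x) y = -C.pair x (K y) := h.2.2.1.pair_apply_left x y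

theorem hconn_smul_right (f : A) (U V : E) :
    C.hconn I J K U (f • V) = C.anchor U f • V + f • C.hconn I J K U V - C.Delta I J K f U V := by
  have two_smul_half : ∀ x : E, (2 : ℝ) • (1 / 2 : ℝ) • x = x := fun x => by
    rw [smul_smul]; norm_num
  -- doubled first: `module` cannot see that `algebraMap ℝ A (1 / 2) * 2 = 1`
  refine smul_right_injective E (two_ne_zero' ℝ) ?_
  simp only [hconn, Delta, map_smul, brac_smul_left]
  simp only [smul_add, smul_sub, smul_neg, smul_comm (2 : ℝ) f, two_smul_half, map_add, map_sub,
    map_neg, map_smul, LinearMap.map_smul_of_tower, h.K_K, h.I_J, h.J_I, h.K_J, h.K_I,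
    h.pair_I_left, h.pair_J_left, h.pair_K_left, C.pair_symm V U, h.1.pair_apply_right_comm U V,
    h.2.1.pair_apply_right_comm U V, h.2.2.1.pair_apply_right_comm U V, neg_neg]
  simp only [ofNat_smul_eq_nsmul ℝ 2]
  module

theorem hconn_apply_J (U V : E) : C.hconn I J K U (J V) = J (C.hconn I J K U V) := by
  simp only [hconn, map_add, map_sub, map_neg, LinearMap.map_smul_of_tower, h.J_J, h.K_K, h.J_I,
    h.J_K, h.K_J, h.K_I, neg_neg, LinearMap.neg_apply]
  module

theorem hconn_apply_I (hII : ∀ U V, C.nij I I U V = 0) (U V : E) :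
    C.hconn I J K U (I V) = I (C.hconn I J K U V) := by
  have s₀ := congrArg I (C.brac_add_swap U V)
  have s₁ := C.brac_add_swap U (I V)
  have s₂ := C.brac_add_swap V (I U)
  have s₃ := congrArg K (C.brac_add_swap U (J V))
  have s₄ := congrArg J (C.brac_add_swap U (K V))
  have s₅ := congrArg I (C.brac_add_swap (I U) (I V))
  have s₆ := congrArg J (C.brac_add_swap (I U) (J V))
  have s₇ := congrArg K (C.brac_add_swap (I U) (K V))
  have n₀ := congrArg I (hII U V)
  have n₁ := congrArg K (hII U (J V))
  simp only [nij, nijGen, hconn, map_add, map_sub, map_neg, map_zero,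
    LinearMap.map_smul_of_tower, h.I_I, h.K_K, h.I_J, h.J_I, h.K_J, h.K_I, h.I_K, h.pair_I_left,
    h.1.pair_apply_right_comm U V, LinearMap.neg_apply, smul_neg, neg_neg]
    at s₀ s₁ s₂ s₃ s₄ s₅ s₆ s₇ n₀ n₁ ⊢
  linear_combination (norm := module) (1 / 2 : ℝ) • (s₀ - s₁ - s₂ - s₃ - s₄ - s₅ - s₆ + s₇) +
    (1 / 4 : ℝ) • (n₀ - n₁)

theorem hconn_apply_K (hII : ∀ U V, C.nij I I U V = 0) (U V : E) :
    C.hconn I J K U (K V) = K (C.hconn I J K U V) := by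
  rw [← h.I_J, h.hconn_apply_I hII, h.hconn_apply_J, h.I_J]

theorem hconn_torsion_eq (hIJ : ∀ U V, C.nij I J U V = 0) (U V : E) :
    C.hconn I J K U V - C.hconn I J K V U - (1 / 2 : ℝ) • (C.brac U V - C.brac V U) =
      I (C.Dm (C.pair U (I V))) + J (C.Dm (C.pair U (J V))) + K (C.Dm (C.pair U (K V))) := by
  have s₀ := congrArg I (C.brac_add_swap V (I U))
  have s₁ := congrArg J (C.brac_add_swap U (J V))
  have s₂ := congrArg K (C.brac_add_swap (I U) (J V))
  have n := congrArg K (hIJ U V)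
  simp only [nij, nijGen, hconn, map_add, map_sub, map_neg, map_zero,
    LinearMap.map_smul_of_tower, h.K_K, h.I_J, h.J_I, h.K_J, h.K_I, h.pair_I_left,
    h.1.pair_apply_right_comm U V, smul_neg, neg_neg]
    at s₀ s₁ s₂ n ⊢
  linear_combination (norm := module) (1 / 2 : ℝ) • (s₁ - s₀ - s₂ + n)

end IsAlmostHypercomplex

end CourantAlgebroid

theorem stmt6 {A E : Type} [CommRing A] [Algebra ℝ A] [AddCommGroup E] [Module ℝ E]
    [Module A E] [IsScalarTower ℝ A E] (C : CourantAlgebroid A E) (I J K : E →ₗ[A] E)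
    (h : C.IsHypercomplex I J K) :
    (∀ (f : A) (U V : E), C.hconn I J K (f • U) V = f • C.hconn I J K U V) ∧
    (∀ (f : A) (U V : E), C.hconn I J K U (f • V) =
      C.anchor U f • V + f • C.hconn I J K U V - C.Delta I J K f U V) ∧
    (∀ U V : E, C.hconn I J K U (I V) = I (C.hconn I J K U V)) ∧
    (∀ U V : E, C.hconn I J K U (J V) = J (C.hconn I J K U V)) ∧
    (∀ U V : E, C.hconn I J K U (K V) = K (C.hconn I J K U V)) ∧
    (∀ U V : E,
      C.hconn I J K U V - C.hconn I J K V U - (1/2 : ℝ) • (C.brac U V - C.brac V U) =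
        I (C.Dm (C.pair U (I V))) + J (C.Dm (C.pair U (J V))) + K (C.Dm (C.pair U (K V)))) := by
  obtain ⟨hq, hII, hIJ, -⟩ := h
  exact ⟨C.hconn_smul_left I J K, hq.hconn_smul_right, hq.hconn_apply_I hII, hq.hconn_apply_J,
    hq.hconn_apply_K hII, hq.hconn_torsion_eq hIJ⟩
end

section
/- Let (I,J,K) be an almost hypercomplex structure on E. If N(I,J) = 0, then N(I,I) = 0 and N(J,J) = 0. -/
/-!
The quaternionic relations give `K = IJ` and `JI = -IJ`. For anticommuting
`F`, `G` with `F² = G² = -1`, expanding shows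
`N(F,F)(U,V) = -FG N(F,G)(U,V) + G N(F,G)(U,FV) + G N(F,G)(FU,V) + FG N(F,G)(FU,FV)`,
and since `N(F,G) = N(G,F)` the same identity with `F`, `G` swapped handles `N(G,G)`.
-/


open scoped TensorProduct
open CourantAlgebroid

namespace CourantAlgebroid

section Nijenhuis

variable {R M : Type*} [CommRing R] [AddCommGroup M] [Module R M]

theorem nijGen_comm (br : M → M → M) (F G : M → M) (U V : M) :
    nijGen br F G U V = nijGen br G F U V := by
  simp only [nijGen]
  abel

variable (br : M →ₗ[R] M →ₗ[R] M) {F G : M →ₗ[R] M}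

theorem nijGen_self_eq_of_anticomm (hF : ∀ x, F (F x) = -x) (hG : ∀ x, G (G x) = -x)
    (hGF : ∀ x, G (F x) = -F (G x)) (U V : M) :
    nijGen (br · ·) F F U V =
      -F (G (nijGen (br · ·) F G U V)) + G (nijGen (br · ·) F G U (F V))
        + G (nijGen (br · ·) F G (F U) V) + F (G (nijGen (br · ·) F G (F U) (F V))) := by
  simp only [nijGen, map_add, map_sub, map_neg, hF, hG, hGF, LinearMap.neg_apply, neg_neg]
  abel

theorem nijGen_self_eq_zero_of_anticomm (hF : ∀ x, F (F x) = -x) (hG : ∀ x, G (G x) = -x)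
    (hGF : ∀ x, G (F x) = -F (G x))
    (hFG : ∀ U V, nijGen (br · ·) F G U V = 0) (U V : M) :
    nijGen (br · ·) F F U V = 0 := by
  simp [nijGen_self_eq_of_anticomm br hF hG hGF, hFG]

end Nijenhuis

theorem IsAlmostHypercomplex.anticomm {A E : Type} [CommRing A] [Algebra ℝ A] [AddCommGroup E]
    [Module ℝ E] [Module A E] [IsScalarTower ℝ A E] {C : CourantAlgebroid A E} {I J K : E →ₗ[A] E}
    (h : C.IsAlmostHypercomplex I J K) (e : E) : J (I e) = -I (J e) := by
  obtain ⟨⟨hI, -⟩, ⟨hJ, -⟩, ⟨hK, -⟩, hIJK⟩ := h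
  have hK_eq : ∀ x, K x = I (J x) := fun x => by
    simpa [hK] using (hIJK (K x)).symm
  have hIJ_sq : ∀ x, I (J (I (J x))) = -x := fun x => by
    rw [← hK_eq, ← hK_eq, hK]
  have := congrArg I (hIJ_sq (J e))
  simpa only [hJ, map_neg, hI, neg_neg] using this

end CourantAlgebroid

theorem stmt10 {A E : Type} [CommRing A] [Algebra ℝ A] [AddCommGroup E] [Module ℝ E]
    [Module A E] [IsScalarTower ℝ A E] (C : CourantAlgebroid A E) (I J K : E →ₗ[A] E)
    (h : C.IsAlmostHypercomplex I J K) (hIJ : ∀ U V : E, C.nij I J U V = 0) :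
    (∀ U V : E, C.nij I I U V = 0) ∧ (∀ U V : E, C.nij J J U V = 0) := by
  have hI : ∀ e, I (I e) = -e := h.1.1
  have hJ : ∀ e, J (J e) = -e := h.2.1.1
  have hJI : ∀ e, J (I e) = -I (J e) := h.anticomm
  have hIJ' : ∀ e, I (J e) = -J (I e) := fun e => by rw [hJI, neg_neg]
  exact ⟨nijGen_self_eq_zero_of_anticomm C.brac (F := I.restrictScalars ℝ)
      (G := J.restrictScalars ℝ) hI hJ hJI hIJ,
    nijGen_self_eq_zero_of_anticomm C.brac (F := J.restrictScalars ℝ)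
      (G := I.restrictScalars ℝ) hJ hI hIJ' fun U V => (nijGen_comm _ _ _ U V).trans (hIJ U V)⟩
end

section
/- Let (I,J,K) be a hypercomplex structure on E. Then for all ξ, η, ζ ∈ L*_J (with the Nijenhuis concomitant formed using the ℂ-bilinearly extended bracket): ⟨N(I,J)(ξ,η), ζ⟩ = 2i·(−ρ(ζ)Ω(ξ,η) + ρ(η)Ω(ξ,ζ) − ρ(ξ)Ω(η,ζ) + Ω(ξ∘η, ζ) + Ω(η, ξ∘ζ) − Ω(ξ, η∘ζ)). -/
open scoped TensorProduct
open CourantAlgebroid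

/-! On `L*_J` we have `Jξ = -iξ`, and `IJ = -JI = K` gives `Ω^♯ξ = Iξ`; hence the terms of
`N(I,J)(ξ,η)` containing `J` collapse to
`2i I(ξ∘η) - i(Iξ∘η + ξ∘Iη) - J(Iξ∘η + ξ∘Iη)`, and pairing with `ζ ∈ L*_J` turns `-J` into
`-i`. The result `2i(⟨I(ξ∘η),ζ⟩ - ⟨Iξ∘η,ζ⟩ - ⟨ξ∘Iη,ζ⟩)` is the right-hand side after expanding
the anchor terms with the axiom `ρ(x)⟨y,z⟩ = ⟨x∘y,z⟩ + ⟨y,x∘z⟩` and the symmetrised bracket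
`⟨x∘y,z⟩ + ⟨y∘x,z⟩ = ρ(z)⟨x,y⟩`. -/

lemma bcBilin_tmul {M N P : Type} [AddCommGroup M] [Module ℝ M] [AddCommGroup N] [Module ℝ N]
    [AddCommGroup P] [Module ℝ P] (B : M →ₗ[ℝ] N →ₗ[ℝ] P) (z w : ℂ) (m : M) (n : N) :
    bcBilin B (z ⊗ₜ[ℝ] m) (w ⊗ₜ[ℝ] n) = (z * w) ⊗ₜ[ℝ] (B m n) := by
  simp [bcBilin, LinearMap.liftBaseChange_tmul, TensorProduct.smul_tmul']

lemma nijGen_of_anticomm {M : Type*} [AddCommGroup M] [Module ℂ M]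
    (br : M →ₗ[ℂ] M →ₗ[ℂ] M) (F G : M →ₗ[ℂ] M) (hFG : ∀ x, F (G x) = -G (F x))
    {ξ η : M} (hξ : G ξ = -(Complex.I • ξ)) (hη : G η = -(Complex.I • η)) :
    nijGen (fun x y => br x y) F G ξ η =
      (2 * Complex.I) • F (br ξ η) - Complex.I • (br (F ξ) η + br ξ (F η))
        - G (br (F ξ) η + br ξ (F η)) := by
  simp only [nijGen, hξ, hη, hFG, map_neg, map_smul, map_add, LinearMap.neg_apply,
    LinearMap.smul_apply]
  module

namespace CourantAlgebroid

variable {A E : Type} [CommRing A] [Algebra ℝ A] [AddCommGroup E] [Module ℝ E]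
  [Module A E] [IsScalarTower ℝ A E]

lemma cext_tmul (F : E →ₗ[A] E) (z : ℂ) (e : E) : cext F (z ⊗ₜ[ℝ] e) = z ⊗ₜ[ℝ] F e := rfl

lemma cext_comp (F G : E →ₗ[A] E) : cext (F ∘ₗ G) = cext F ∘ₗ cext G := by
  rw [cext, cext, cext, LinearMap.restrictScalars_comp, LinearMap.baseChange_comp]

lemma cext_neg (F : E →ₗ[A] E) : cext (-F) = -cext F := by
  rw [cext, cext, LinearMap.restrictScalars_neg, LinearMap.baseChange_neg]

lemma cext_apply_cext_of_comp {F G H : E →ₗ[A] E} (h : F ∘ₗ G = H) (x : ℂ ⊗[ℝ] E) :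
    cext F (cext G x) = cext H x := by
  rw [← h, cext_comp, LinearMap.comp_apply]

lemma OmS_apply_of_mem_eigM {I J K : E →ₗ[A] E} (hIJ : I ∘ₗ J = K) {x : ℂ ⊗[ℝ] E}
    (hx : x ∈ eigM (cext J)) : OmS I K x = cext I x := by
  have hK : cext K x = -(Complex.I • cext I x) := by
    rw [← cext_apply_cext_of_comp hIJ, hx, map_neg, map_smul]
  simp only [OmS, LinearMap.smul_apply, LinearMap.add_apply, hK, smul_neg, smul_smul,
    Complex.I_mul_I]
  module

variable (C : CourantAlgebroid A E)

lemma pairC_tmul (z w : ℂ) (x y : E) :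
    C.pairC (z ⊗ₜ[ℝ] x) (w ⊗ₜ[ℝ] y) = (z * w) ⊗ₜ[ℝ] C.pair x y :=
  bcBilin_tmul _ _ _ _ _

lemma bracC_tmul (z w : ℂ) (x y : E) :
    C.bracC (z ⊗ₜ[ℝ] x) (w ⊗ₜ[ℝ] y) = (z * w) ⊗ₜ[ℝ] C.brac x y :=
  bcBilin_tmul _ _ _ _ _

lemma rhoC_tmul (z w : ℂ) (x : E) (f : A) :
    C.rhoC (z ⊗ₜ[ℝ] x) (w ⊗ₜ[ℝ] f) = (z * w) ⊗ₜ[ℝ] C.anchor x f :=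
  bcBilin_tmul _ _ _ _ _

lemma pair_brac_add_pair_brac_swap (x y z : E) :
    C.pair (C.brac x y) z + C.pair (C.brac y x) z = C.anchor z (C.pair x y) := by
  rw [← LinearMap.add_apply, ← map_add, C.brac_add_swap, ← algebraMap_smul A (2 : ℝ),
    map_smul, LinearMap.smul_apply, algebraMap_smul, C.pair_Dm, smul_smul]
  norm_num

lemma rhoC_pairC (x y z : ℂ ⊗[ℝ] E) :
    C.rhoC x (C.pairC y z) = C.pairC (C.bracC x y) z + C.pairC y (C.bracC x z) := by
  induction x using TensorProduct.induction_on with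
  | zero => simp
  | add a b ha hb => simp only [map_add, LinearMap.add_apply, ha, hb]; abel
  | tmul z₁ x =>
    induction y using TensorProduct.induction_on with
    | zero => simp
    | add a b ha hb => simp only [map_add, LinearMap.add_apply, ha, hb]; abel
    | tmul z₂ y =>
      induction z using TensorProduct.induction_on with
      | zero => simp
      | add a b ha hb => simp only [map_add, ha, hb]; abel
      | tmul z₃ z =>
        simp only [pairC_tmul, rhoC_tmul, bracC_tmul, C.anchor_pair, TensorProduct.tmul_add]
        ring_nf

lemma pairC_bracC_add_pairC_bracC_swap (x y z : ℂ ⊗[ℝ] E) :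
    C.pairC (C.bracC x y) z + C.pairC (C.bracC y x) z = C.rhoC z (C.pairC x y) := by
  induction x using TensorProduct.induction_on with
  | zero => simp
  | add a b ha hb => simp only [map_add, LinearMap.add_apply, ← ha, ← hb]; abel
  | tmul z₁ x =>
    induction y using TensorProduct.induction_on with
    | zero => simp
    | add a b ha hb => simp only [map_add, LinearMap.add_apply, ← ha, ← hb]; abel
    | tmul z₂ y =>
      induction z using TensorProduct.induction_on with
      | zero => simp
      | add a b ha hb => simp only [map_add, LinearMap.add_apply, ← ha, ← hb]; abel
      | tmul z₃ z =>
        simp only [pairC_tmul, rhoC_tmul, bracC_tmul, ← C.pair_brac_add_pair_brac_swap,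
          TensorProduct.tmul_add]
        ring_nf

lemma pairC_bracC_left (u y z : ℂ ⊗[ℝ] E) :
    C.pairC (C.bracC u y) z =
      C.rhoC z (C.pairC u y) - C.rhoC y (C.pairC u z) + C.pairC u (C.bracC y z) := by
  rw [← pairC_bracC_add_pairC_bracC_swap, rhoC_pairC]
  abel

lemma pairC_cext_left {F : E →ₗ[A] E} (hF : ∀ x y, C.pair (F x) y = -C.pair x (F y))
    (x y : ℂ ⊗[ℝ] E) : C.pairC (cext F x) y = -C.pairC x (cext F y) := by
  induction x using TensorProduct.induction_on with
  | zero => simp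
  | add a b ha hb => simp only [map_add, LinearMap.add_apply, ha, hb, neg_add]
  | tmul z x =>
    induction y using TensorProduct.induction_on with
    | zero => simp
    | add a b ha hb => simp only [map_add, ha, hb, neg_add]
    | tmul w y => rw [cext_tmul, cext_tmul, pairC_tmul, pairC_tmul, hF, TensorProduct.tmul_neg]

lemma IsAlmostComplexStr.pair_apply_left_s12 {J : E →ₗ[A] E} (hJ : C.IsAlmostComplexStr J)
    (x y : E) : C.pair (J x) y = -C.pair x (J y) := by
  rw [← hJ.2 x (J y), hJ.1, map_neg, neg_neg]

lemma IsAlmostComplexStr.pairC_cext_left {J : E →ₗ[A] E} (hJ : C.IsAlmostComplexStr J)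
    (x y : ℂ ⊗[ℝ] E) : C.pairC (cext J x) y = -C.pairC x (cext J y) :=
  C.pairC_cext_left (hJ.pair_apply_left_s12 C) x y

lemma Omf_of_mem_eigM_left {I J K : E →ₗ[A] E} (hIJ : I ∘ₗ J = K) {x : ℂ ⊗[ℝ] E}
    (hx : x ∈ eigM (cext J)) (y : ℂ ⊗[ℝ] E) : C.Omf I K x y = C.pairC (cext I x) y := by
  rw [Omf, OmS_apply_of_mem_eigM hIJ hx]

variable {C}

lemma IsAlmostHypercomplex.comp_I_J {I J K : E →ₗ[A] E} (h : C.IsAlmostHypercomplex I J K) :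
    I ∘ₗ J = K := by
  ext e
  simpa [h.2.2.1.1] using h.2.2.2 (-K e)

lemma IsAlmostHypercomplex.comp_J_I {I J K : E →ₗ[A] E} (h : C.IsAlmostHypercomplex I J K) :
    J ∘ₗ I = -K := by
  have hJK : ∀ e, J (K e) = I e := fun e => by
    simpa [h.1.1] using congrArg I (h.2.2.2 e)
  ext e
  simp [← hJK, h.2.1.1]

lemma IsAlmostHypercomplex.Omf_of_mem_eigM_right {I J K : E →ₗ[A] E}
    (h : C.IsAlmostHypercomplex I J K) (x : ℂ ⊗[ℝ] E) {y : ℂ ⊗[ℝ] E}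
    (hy : y ∈ eigM (cext J)) : C.Omf I K x y = C.pairC (cext I x) y := by
  have hKy : cext K y = -(Complex.I • cext I y) := by
    rw [← cext_apply_cext_of_comp h.comp_I_J, hy, map_neg, map_smul]
  simp only [Omf, OmS, LinearMap.smul_apply, LinearMap.add_apply, map_smul, map_add,
    h.2.2.1.pairC_cext_left C x, hKy, map_neg, h.1.pairC_cext_left C x y, neg_neg, smul_smul,
    Complex.I_mul_I]
  module

end CourantAlgebroid

theorem stmt12 {A E : Type} [CommRing A] [Algebra ℝ A] [AddCommGroup E] [Module ℝ E]
    [Module A E] [IsScalarTower ℝ A E] (C : CourantAlgebroid A E) (I J K : E →ₗ[A] E)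
    (h : C.IsHypercomplex I J K) :
    ∀ ξ η ζ : ℂ ⊗[ℝ] E, ξ ∈ eigM (cext J) → η ∈ eigM (cext J) → ζ ∈ eigM (cext J) →
      C.pairC (nijGen (fun x y => C.bracC x y) (⇑(cext I)) (⇑(cext J)) ξ η) ζ =
        (2 * Complex.I) •
          (-(C.rhoC ζ (C.Omf I K ξ η)) + C.rhoC η (C.Omf I K ξ ζ) - C.rhoC ξ (C.Omf I K η ζ)
            + C.Omf I K (C.bracC ξ η) ζ + C.Omf I K η (C.bracC ξ ζ)
            - C.Omf I K ξ (C.bracC η ζ)) := by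
  have hA := h.1
  intro ξ η ζ hξ hη hζ
  have hIJ_anticomm : ∀ x, cext I (cext J x) = -cext J (cext I x) := fun x => by
    rw [cext_apply_cext_of_comp hA.comp_I_J, cext_apply_cext_of_comp hA.comp_J_I, cext_neg,
      LinearMap.neg_apply, neg_neg]
  have hJζ : ∀ x, C.pairC (cext J x) ζ = Complex.I • C.pairC x ζ := fun x => by
    rw [hA.2.1.pairC_cext_left, hζ, map_neg, map_smul, neg_neg]
  rw [nijGen_of_anticomm C.bracC (cext I) (cext J) hIJ_anticomm hξ hη,
    hA.Omf_of_mem_eigM_right ξ hη, hA.Omf_of_mem_eigM_right ξ hζ,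
    hA.Omf_of_mem_eigM_right η hζ, hA.Omf_of_mem_eigM_right _ hζ,
    C.Omf_of_mem_eigM_left hA.comp_I_J hη, C.Omf_of_mem_eigM_left hA.comp_I_J hξ]
  simp only [map_sub, map_smul, map_add, LinearMap.sub_apply, LinearMap.smul_apply,
    LinearMap.add_apply, hJζ]
  rw [C.pairC_bracC_left (cext I ξ) η ζ, C.rhoC_pairC ξ (cext I η) ζ]
  module
end
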